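/- arXiv:1812.02637 — 3 statements merged into one kernel-verified Lean document; each statement's English description precedes it below -/
import Mathlib

section
/- Let δ ↦ L(δ) be a continuous real-valued function on ℝⁿ, let ‖·‖ be a norm, let ε ≥ 0 and let ρ be a real number with ρ ≥ L(0) and ρ in the range of L. If the minimum of ‖δ‖ over the set {δ : L(δ) ≥ ρ} equals ε, then the maximum of L(δ) over the closed ball {δ : ‖δ‖ ≤ ε} equals ρ. -/
/-!
The intermediate value theorem on the segment from `0` to a norm-minimiser `δ₀` of
`{δ | ρ ≤ L δ}` produces a point of the ball where `L = ρ`. If instead `ρ < L δ` with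
`‖δ‖ ≤ ε`, then `δ ≠ 0` since `L 0 ≤ ρ`, and by continuity `t • δ` with `t < 1` close to `1`
still satisfies `ρ < L (t • δ)` while being strictly shorter than `ε`, contradicting minimality.
-/

open Filter Topology Set

theorem exists_norm_le_apply_eq {E : Type*} [NormedAddCommGroup E] [NormedSpace ℝ E]
    {L : E → ℝ} {δ : E} {ρ : ℝ} (hL : ContinuousOn L (segment ℝ 0 δ)) (h0 : L 0 ≤ ρ)
    (hδ : ρ ≤ L δ) : ∃ δ', ‖δ'‖ ≤ ‖δ‖ ∧ L δ' = ρ := by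
  obtain ⟨δ', hseg, hLδ'⟩ := (convex_segment (0 : E) δ).isPreconnected.intermediate_value
    (left_mem_segment ℝ 0 δ) (right_mem_segment ℝ 0 δ) hL ⟨h0, hδ⟩
  have hball : segment ℝ 0 δ ⊆ Metric.closedBall 0 ‖δ‖ :=
    (convex_closedBall 0 ‖δ‖).segment_subset (Metric.mem_closedBall_self (norm_nonneg δ))
      (mem_closedBall_zero_iff.2 le_rfl)
  exact ⟨δ', mem_closedBall_zero_iff.1 (hball hseg), hLδ'⟩

theorem exists_norm_lt_of_lt_apply {E : Type*} [NormedAddCommGroup E] [NormedSpace ℝ E]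
    {L : E → ℝ} {δ : E} {ρ : ℝ} (hL : ContinuousAt L δ) (hδ : δ ≠ 0) (h : ρ < L δ) :
    ∃ δ', ‖δ'‖ < ‖δ‖ ∧ ρ < L δ' := by
  have hlim : Tendsto (fun t : ℝ => t • δ) (𝓝[<] 1) (𝓝 δ) :=
    ((continuous_id.smul continuous_const).tendsto' 1 δ (one_smul ℝ δ)).mono_left
      nhdsWithin_le_nhds
  have hIoo : ∀ᶠ t in 𝓝[<] (1 : ℝ), t ∈ Ioo 0 1 := Ioo_mem_nhdsLT zero_lt_one
  obtain ⟨t, ht, hLt⟩ := (hIoo.and (hlim.eventually (hL.eventually (lt_mem_nhds h)))).exists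
  refine ⟨t • δ, ?_, hLt⟩
  rw [norm_smul, Real.norm_of_nonneg ht.1.le]
  exact mul_lt_of_lt_one_left (norm_pos_iff.2 hδ) ht.2

theorem max_on_ball_of_min_norm_general {E : Type*} [NormedAddCommGroup E] [NormedSpace ℝ E]
    (L : E → ℝ) (hL : Continuous L) (ε ρ : ℝ)
    (hρ0 : L 0 ≤ ρ)
    (hmin : IsLeast ((fun δ => ‖δ‖) '' {δ | ρ ≤ L δ}) ε) :
    IsGreatest (L '' {δ | ‖δ‖ ≤ ε}) ρ := by
  obtain ⟨⟨δ₀, hδ₀, rfl⟩, hlb⟩ := hmin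
  refine ⟨exists_norm_le_apply_eq hL.continuousOn hρ0 hδ₀, ?_⟩
  rintro _ ⟨δ, hδ, rfl⟩
  by_contra! hlt
  obtain rfl | hne := eq_or_ne δ 0
  · exact hlt.not_ge hρ0
  obtain ⟨δ', hδ'δ, hLδ'⟩ := exists_norm_lt_of_lt_apply hL.continuousAt hne hlt
  exact (hlb ⟨δ', hLδ'.le, rfl⟩).not_gt (hδ'δ.trans_le hδ)

/-- If the minimum of `‖δ‖` over `{δ | L δ ≥ ρ}` equals `ε`, with `ρ ≥ L 0` and `ρ` in the
range of the continuous function `L`, then the maximum of `L` over the closed ball of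
radius `ε` equals `ρ`. -/
theorem max_on_ball_of_min_norm {E : Type*} [NormedAddCommGroup E] [NormedSpace ℝ E]
    [FiniteDimensional ℝ E] (L : E → ℝ) (hL : Continuous L) (ε ρ : ℝ) (hε : 0 ≤ ε)
    (hρ0 : L 0 ≤ ρ) (hρrange : ρ ∈ Set.range L)
    (hmin : IsLeast ((fun δ => ‖δ‖) '' {δ | ρ ≤ L δ}) ε) :
    IsGreatest (L '' {δ | ‖δ‖ ≤ ε}) ρ :=
  max_on_ball_of_min_norm_general L hL ε ρ hρ0 hmin
end

section
/- Define the cross entropy loss L_CE(f,y) = log(∑_j exp(f_j)) − f_y and the soft logit margin loss L_SLM(f,y) = log(∑_{j≠y} exp(f_j)) − f_y as functions of the logit vector f ∈ ℝᴷ, and let r(f,y) = (∑_{i≠y} exp(f_i)) / (∑_i exp(f_i)). If f = f(u) is a differentiable function of a parameter u, then ∇_u L_CE(f(u), y) = r(f(u), y) · ∇_u L_SLM(f(u), y). -/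
/-- For a differentiable map `u ↦ f u` into the logit space, the gradient of the cross
entropy loss equals `r(f u, y)` times the gradient of the soft logit margin loss, where
`r(f,y) = (∑_{i≠y} exp f_i) / (∑_i exp f_i)`. -/
theorem fderiv_ce_eq_r_smul_fderiv_slm {K : ℕ} (hK : 2 ≤ K) (y : Fin K)
    {E : Type*} [NormedAddCommGroup E] [NormedSpace ℝ E]
    (f : E → Fin K → ℝ) (u : E) (hf : DifferentiableAt ℝ f u) :
    fderiv ℝ (fun v => Real.log (∑ j, Real.exp (f v j)) - f v y) u =
      ((∑ i ∈ Finset.univ.erase y, Real.exp (f u i)) / (∑ i, Real.exp (f u i))) •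
        fderiv ℝ (fun v => Real.log (∑ j ∈ Finset.univ.erase y, Real.exp (f v j)) - f v y) u := by
  set D : Fin K → (E →L[ℝ] ℝ) := fun j => (ContinuousLinearMap.proj j).comp (fderiv ℝ f u) with hDdef
  haveI : Nonempty (Fin K) := ⟨y⟩
  have hD : ∀ j, HasFDerivAt (fun v => f v j) (D j) u := fun j =>
    ((ContinuousLinearMap.proj j : (Fin K → ℝ) →L[ℝ] ℝ).hasFDerivAt).comp u hf.hasFDerivAt
  set S : ℝ := ∑ j, Real.exp (f u j) with hS
  set T : ℝ := ∑ j ∈ Finset.univ.erase y, Real.exp (f u j) with hT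
  have hSpos : 0 < S := Finset.sum_pos (fun i _ => Real.exp_pos _) Finset.univ_nonempty
  have hTne : (Finset.univ.erase y).Nonempty := by
    rw [← Finset.card_pos, Finset.card_erase_of_mem (Finset.mem_univ y), Finset.card_univ,
      Fintype.card_fin]
    omega
  have hTpos : 0 < T := Finset.sum_pos (fun i _ => Real.exp_pos _) hTne
  have hsum : HasFDerivAt (fun v => ∑ j, Real.exp (f v j))
      (∑ j, Real.exp (f u j) • D j) u :=
    HasFDerivAt.fun_sum fun j _ => (hD j).exp
  have hsum' : HasFDerivAt (fun v => ∑ j ∈ Finset.univ.erase y, Real.exp (f v j))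
      (∑ j ∈ Finset.univ.erase y, Real.exp (f u j) • D j) u :=
    HasFDerivAt.fun_sum fun j _ => (hD j).exp
  have hCE : HasFDerivAt (fun v => Real.log (∑ j, Real.exp (f v j)) - f v y)
      (S⁻¹ • (∑ j, Real.exp (f u j) • D j) - D y) u :=
    (hsum.log hSpos.ne').sub (hD y)
  have hSLM : HasFDerivAt
      (fun v => Real.log (∑ j ∈ Finset.univ.erase y, Real.exp (f v j)) - f v y)
      (T⁻¹ • (∑ j ∈ Finset.univ.erase y, Real.exp (f u j) • D j) - D y) u :=
    (hsum'.log hTpos.ne').sub (hD y)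
  rw [hCE.fderiv, hSLM.fderiv]
  have hsplit : (∑ j, Real.exp (f u j) • D j)
      = Real.exp (f u y) • D y + ∑ j ∈ Finset.univ.erase y, Real.exp (f u j) • D j :=
    (Finset.add_sum_erase _ _ (Finset.mem_univ y)).symm
  have hST : Real.exp (f u y) = S - T := by
    rw [hS, hT, ← Finset.add_sum_erase _ _ (Finset.mem_univ y)]; ring
  ext x
  simp only [ContinuousLinearMap.smul_apply, ContinuousLinearMap.sub_apply,
    ContinuousLinearMap.add_apply, hsplit, smul_eq_mul]
  field_simp
  rw [hST]
  ring
end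

section
/- Let L(·,θ) : ℝⁿ → ℝ be continuous, d_θ = min{‖δ‖ : L(δ,θ) ≥ 0} attained, and 0 ≤ ε < d_θ. Then ρ* := max_{‖δ‖≤ε} L(δ,θ) ≤ 0, and ε*_θ(ρ*) := min{‖δ‖ : L(δ,θ) ≥ ρ*} ≤ d_θ (the quantity maximized by adversarial training at this ε is a lower bound of the margin). -/
section SuperlevelNorm

variable {E β : Type*} [Norm E] [LinearOrder β] {L : E → β}

theorem lt_of_norm_lt_of_isLeast_norm_superlevel {t : β} {d : ℝ}
    (hd : IsLeast ((fun δ => ‖δ‖) '' {δ | t ≤ L δ}) d) {δ : E} (hδ : ‖δ‖ < d) : L δ < t :=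
  lt_of_not_ge fun htδ => (hd.2 ⟨δ, htδ, rfl⟩).not_gt hδ

theorem le_of_isLeast_norm_superlevel_of_le {ρ ρ' : β} {a b : ℝ} (hρ : ρ ≤ ρ')
    (ha : IsLeast ((fun δ => ‖δ‖) '' {δ | ρ ≤ L δ}) a)
    (hb : IsLeast ((fun δ => ‖δ‖) '' {δ | ρ' ≤ L δ}) b) : a ≤ b :=
  hb.mono ha (Set.image_mono fun _ hδ => hρ.trans hδ)

end SuperlevelNorm

theorem adv_training_small_eps_lower_bound_general {E : Type*} [NormedAddCommGroup E]
    (L : E → ℝ)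
    (d ε ρstar estar : ℝ)
    (hd : IsLeast ((fun δ => ‖δ‖) '' {δ | 0 ≤ L δ}) d)
    (hεd : ε < d)
    (hmax : IsGreatest (L '' {δ | ‖δ‖ ≤ ε}) ρstar)
    (hmin : IsLeast ((fun δ => ‖δ‖) '' {δ | ρstar ≤ L δ}) estar) :
    ρstar ≤ 0 ∧ estar ≤ d := by
  obtain ⟨⟨δ, hδε, rfl⟩, -⟩ := hmax
  have hρ : L δ ≤ 0 := (lt_of_norm_lt_of_isLeast_norm_superlevel hd (hδε.trans_lt hεd)).le
  exact ⟨hρ, le_of_isLeast_norm_superlevel_of_le hρ hmin hd⟩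

/-- For `0 ≤ ε <` margin `d`: the maximum `ρ*` of `L` over the `ε`-ball is `≤ 0`, and the
minimal norm achieving loss `≥ ρ*` is at most `d` (a lower bound of the margin). -/
theorem adv_training_small_eps_lower_bound {E : Type*} [NormedAddCommGroup E]
    [NormedSpace ℝ E] [FiniteDimensional ℝ E] (L : E → ℝ) (hL : Continuous L)
    (d ε ρstar estar : ℝ)
    (hd : IsLeast ((fun δ => ‖δ‖) '' {δ | 0 ≤ L δ}) d)
    (hε0 : 0 ≤ ε) (hεd : ε < d)
    (hmax : IsGreatest (L '' {δ | ‖δ‖ ≤ ε}) ρstar)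
    (hmin : IsLeast ((fun δ => ‖δ‖) '' {δ | ρstar ≤ L δ}) estar) :
    ρstar ≤ 0 ∧ estar ≤ d :=
  adv_training_small_eps_lower_bound_general L d ε ρstar estar hd hεd hmax hmin
end
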